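/- For every k ≥ 1, the word s_Mu^k(a) (the k-th iterate of the substitution a→aca, c→d, d→c applied to a) is a palindrome. -/
import Mathlib


/-- The alphabet `{a, c, d}`. -/
inductive ACD : Type
  | a | c | d
deriving DecidableEq

/-- The substitution `a → aca`, `c → d`, `d → c`. -/
def sMu : ACD → List ACD
  | ACD.a => [ACD.a, ACD.c, ACD.a]
  | ACD.c => [ACD.d]
  | ACD.d => [ACD.c]

/-- The substitution `sMu` extended to words by concatenation. -/
def sMuW (w : List ACD) : List ACD := (w.map sMu).flatten

lemma sMu_pal (x : ACD) : (sMu x).reverse = sMu x := by cases x <;> rfl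

lemma sMuW_cons (x : ACD) (w : List ACD) : sMuW (x :: w) = sMu x ++ sMuW w := by
  simp [sMuW]

lemma sMuW_append (u v : List ACD) : sMuW (u ++ v) = sMuW u ++ sMuW v := by
  simp [sMuW]

lemma sMuW_reverse (w : List ACD) : (sMuW w).reverse = sMuW w.reverse := by
  induction w with
  | nil => rfl
  | cons x w ih =>
      rw [sMuW_cons, List.reverse_append, ih, List.reverse_cons, sMuW_append, sMu_pal]
      simp [sMuW]

/-- For every `k ≥ 1`, the word `sMu^k(a)` is a palindrome. -/
theorem sMu_iterate_palindrome :
    ∀ k : ℕ, 1 ≤ k → (sMuW^[k] [ACD.a]).reverse = sMuW^[k] [ACD.a] := by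
  intro k hk
  induction k with
  | zero => omega
  | succ n ih =>
      rcases Nat.eq_or_lt_of_le hk with h | h
      · simp [← h]; rfl
      · rw [Function.iterate_succ_apply', sMuW_reverse, ih (by omega)]
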